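/- Let (F_k)_{k∈[C]} be function classes from X to ℝ, G a set of classifiers from X to [C], and F_G the associated piecewise class. Then for any q ∈ [1,∞), sample x_1,...,x_n, and ε > 0, N(ε, F_G, d_q) ≤ Π_G(n) · ∏_{k=1}^C N(ε / C^{1/q}, F_k, d_q). -/

import Mathlib

/-- Empirical L_q pseudo-metric on a sample. -/
noncomputable def empDist {Z : Type*} {n : ℕ} (q : ℝ) (z : Fin n → Z)
    (f g : Z → ℝ) : ℝ :=
  ((n : ℝ)⁻¹ * ∑ i, |f (z i) - g (z i)| ^ q) ^ (1 / q)

/-- Empirical L_∞ pseudo-metric on a sample. -/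
noncomputable def empDistInf {Z : Type*} {n : ℕ} (z : Fin n → Z)
    (f g : Z → ℝ) : ℝ :=
  ⨆ i, |f (z i) - g (z i)|

/-- Covering number: smallest cardinality of a proper ε-net of F
(distance at most ε). -/
noncomputable def covN {α : Type*} (ε : ℝ) (F : Set α) (d : α → α → ℝ) : ℕ∞ :=
  sInf {m : ℕ∞ | ∃ H : Finset α, ↑H ⊆ F ∧ (∀ f ∈ F, ∃ h ∈ H, d f h ≤ ε) ∧
    (H.card : ℕ∞) = m}
/-!
A function `w ↦ f_{g w} w` of the piecewise class is pinned down on the sample by the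
classification `(g (x i))ᵢ` and by its branches. Fix one classifier `g₀ ∈ G` for each of the
classifications realized by `G`, and an `ε / C^{1/q}`-net `H k` of each `F k`. The functions
`w ↦ h_{g₀ w} w` with `h k ∈ H k` form an `ε`-net: at a sample point the `q`-th power error of the
chosen branch is at most the sum of the errors over all `C` branches, so the mean is at most
`C (ε / C^{1/q})^q = ε^q`.
-/

def IsProperNet {α : Type*} (ε : ℝ) (F : Set α) (d : α → α → ℝ) (H : Finset α) : Prop :=
  ↑H ⊆ F ∧ ∀ f ∈ F, ∃ h ∈ H, d f h ≤ ε

section CoveringNumber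

variable {α : Type*} {ε : ℝ} {F : Set α} {d : α → α → ℝ}

lemma covN_le_card {H : Finset α} (hH : IsProperNet ε F d H) : covN ε F d ≤ H.card :=
  sInf_le ⟨H, hH.1, hH.2, rfl⟩

lemma covN_empty : covN ε ∅ d = 0 :=
  nonpos_iff_eq_zero.mp <| covN_le_card (H := ∅) ⟨by simp, by simp⟩

lemma covN_ne_zero (hF : F.Nonempty) : covN ε F d ≠ 0 := by
  rw [covN, ne_eq, ENat.sInf_eq_zero]
  rintro ⟨H, -, hnet, hcard⟩
  obtain ⟨f, hf⟩ := hF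
  obtain ⟨h, hh, -⟩ := hnet f hf
  simp_all

lemma exists_isProperNet_card_eq_covN (htop : covN ε F d ≠ ⊤) :
    ∃ H : Finset α, IsProperNet ε F d H ∧ (H.card : ℕ∞) = covN ε F d := by
  have hne : {m : ℕ∞ | ∃ H : Finset α, ↑H ⊆ F ∧ (∀ f ∈ F, ∃ h ∈ H, d f h ≤ ε) ∧
      (H.card : ℕ∞) = m}.Nonempty :=
    Set.nonempty_iff_ne_empty.mpr fun h => htop (by rw [covN, h, sInf_empty])
  obtain ⟨H, hHF, hnet, hcard⟩ := csInf_mem hne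
  exact ⟨H, ⟨hHF, hnet⟩, hcard⟩

lemma covN_anti {ε' : ℝ} (hε : ε' ≤ ε) : covN ε F d ≤ covN ε' F d :=
  sInf_le_sInf fun _ ⟨H, hHF, hnet, hcard⟩ =>
    ⟨H, hHF, fun f hf => (hnet f hf).imp fun _ ⟨hh, hd⟩ => ⟨hh, hd.trans hε⟩, hcard⟩

end CoveringNumber

section EmpiricalDistance

variable {Z : Type*} {n : ℕ} {q : ℝ}

lemma empDist_le_iff (hq : 0 < q) {ε : ℝ} (hε : 0 ≤ ε) (z : Fin n → Z) (f g : Z → ℝ) :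
    empDist q z f g ≤ ε ↔ (n : ℝ)⁻¹ * ∑ i, |f (z i) - g (z i)| ^ q ≤ ε ^ q := by
  rw [empDist, one_div]
  exact Real.rpow_inv_le_iff_of_pos (by positivity) hε hq

lemma empDist_piecewise_le {ι : Type*} [Fintype ι] (hq : 0 < q) {δ : ℝ} (hδ : 0 ≤ δ)
    (z : Fin n → Z) {g g' : Z → ι} (hg : ∀ i, g' (z i) = g (z i)) {f h : ι → Z → ℝ}
    (hfh : ∀ k, empDist q z (f k) (h k) ≤ δ) :
    empDist q z (fun w => f (g w) w) (fun w => h (g' w) w)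
      ≤ (Fintype.card ι : ℝ) ^ (1 / q) * δ := by
  rw [empDist_le_iff hq (by positivity), Real.mul_rpow (by positivity) hδ, one_div,
    Real.rpow_inv_rpow (by positivity) hq.ne']
  simp only [hg]
  calc (n : ℝ)⁻¹ * ∑ i, |f (g (z i)) (z i) - h (g (z i)) (z i)| ^ q
      ≤ (n : ℝ)⁻¹ * ∑ i, ∑ k, |f k (z i) - h k (z i)| ^ q := by
        gcongr with i
        exact Finset.single_le_sum (f := fun k => |f k (z i) - h k (z i)| ^ q)
          (fun k _ => by positivity) (Finset.mem_univ _)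
    _ = ∑ k, (n : ℝ)⁻¹ * ∑ i, |f k (z i) - h k (z i)| ^ q := by
        rw [Finset.sum_comm, Finset.mul_sum]
    _ ≤ ∑ _k : ι, δ ^ q := Finset.sum_le_sum fun k _ => (empDist_le_iff hq hδ z _ _).mp (hfh k)
    _ = Fintype.card ι * δ ^ q := by simp

end EmpiricalDistance

def piecewiseClass {X ι : Type*} (F : ι → Set (X → ℝ)) (G : Set (X → ι)) : Set (X → ℝ) :=
  {f | ∃ g ∈ G, ∃ fk : ι → X → ℝ, (∀ k, fk k ∈ F k) ∧ f = fun w => fk (g w) w}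

section PiecewiseClass

variable {X ι : Type*} {n : ℕ}

lemma exists_finset_classification_representatives [Finite ι] (G : Set (X → ι)) (x : Fin n → X) :
    ∃ G₀ : Finset (X → ι), ↑G₀ ⊆ G ∧ (∀ g ∈ G, ∃ g₀ ∈ G₀, ∀ i, g₀ (x i) = g (x i)) ∧
      G₀.card = Set.ncard {c : Fin n → ι | ∃ g ∈ G, c = fun i => g (x i)} := by
  obtain ⟨G₀, hG₀G, hbij⟩ := Set.exists_subset_bijOn G fun g i => g (x i)
  have hG₀ : G₀.Finite := .of_finite_image (hbij.image_eq ▸ Set.toFinite _) hbij.injOn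
  refine ⟨hG₀.toFinset, by simpa using hG₀G, fun g hg => ?_, ?_⟩
  · obtain ⟨g₀, hg₀, hg₀g⟩ := hbij.surjOn ⟨g, hg, rfl⟩
    exact ⟨g₀, by simpa using hg₀, fun i => congrFun hg₀g i⟩
  · have hpatterns : {c : Fin n → ι | ∃ g ∈ G, c = fun i => g (x i)} =
        (fun g i => g (x i)) '' G := by
      ext c; simp [eq_comm]
    rw [hpatterns, ← hbij.image_eq, hbij.injOn.ncard_image, Set.ncard_eq_toFinset_card _ hG₀]

lemma covN_piecewiseClass_le [Fintype ι] {F : ι → Set (X → ℝ)} {G : Set (X → ι)}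
    {q δ : ℝ} (hq : 0 < q) (hδ : 0 ≤ δ) (x : Fin n → X) (G₀ : Finset (X → ι)) (hG₀G : ↑G₀ ⊆ G)
    (hrep : ∀ g ∈ G, ∃ g₀ ∈ G₀, ∀ i, g₀ (x i) = g (x i))
    (H : ι → Finset (X → ℝ)) (hH : ∀ k, IsProperNet δ (F k) (empDist q x) (H k)) :
    covN ((Fintype.card ι : ℝ) ^ (1 / q) * δ) (piecewiseClass F G) (empDist q x)
      ≤ G₀.card * ∏ k, ((H k).card : ℕ∞) := by
  classical
  set net := (G₀ ×ˢ Fintype.piFinset H).image fun p => fun w => p.2 (p.1 w) w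
  have hnet : IsProperNet ((Fintype.card ι : ℝ) ^ (1 / q) * δ) (piecewiseClass F G)
      (empDist q x) net := by
    constructor
    · intro f hf
      simp only [net, Finset.coe_image, Set.mem_image, Finset.mem_coe, Finset.mem_product,
        Fintype.mem_piFinset] at hf
      obtain ⟨⟨g₀, h⟩, ⟨hg₀, hh⟩, rfl⟩ := hf
      exact ⟨g₀, hG₀G hg₀, h, fun k => (hH k).1 (hh k), rfl⟩
    · rintro _ ⟨g, hg, f, hf, rfl⟩
      obtain ⟨g₀, hg₀, hg₀g⟩ := hrep g hg
      choose h hh hfh using fun k => (hH k).2 (f k) (hf k)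
      refine ⟨fun w => h (g₀ w) w, Finset.mem_image.mpr ⟨(g₀, h), ?_, rfl⟩,
        empDist_piecewise_le hq hδ x hg₀g hfh⟩
      exact Finset.mem_product.mpr ⟨hg₀, Fintype.mem_piFinset.mpr hh⟩
  calc _ ≤ (net.card : ℕ∞) := covN_le_card hnet
    _ ≤ ((G₀ ×ˢ Fintype.piFinset H).card : ℕ∞) := by exact_mod_cast Finset.card_image_le
    _ = G₀.card * ∏ k, ((H k).card : ℕ∞) := by
      simp [Finset.card_product, Fintype.card_piFinset]

end PiecewiseClass

theorem covN_pws_q_general {X : Type*} (C n : ℕ)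
    (F : Fin C → Set (X → ℝ)) (G : Set (X → Fin C)) (x : Fin n → X)
    (q ε : ℝ) (hq : 1 ≤ q) (hε : 0 < ε) :
    covN ε
      {f : X → ℝ | ∃ g ∈ G, ∃ fk : Fin C → X → ℝ, (∀ k, fk k ∈ F k) ∧
        f = fun w => fk (g w) w}
      (empDist q x)
      ≤ (Set.ncard {c : Fin n → Fin C | ∃ g ∈ G, c = fun i => g (x i)} : ℕ∞) *
          ∏ k : Fin C, covN (ε / (C : ℝ) ^ ((1 : ℝ) / q)) (F k) (empDist q x) := by
  have hq0 : 0 < q := zero_lt_one.trans_le hq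
  set δ := ε / (C : ℝ) ^ ((1 : ℝ) / q)
  change covN ε (piecewiseClass F G) _ ≤ _
  obtain ⟨G₀, hG₀G, hrep, hG₀card⟩ := exists_finset_classification_representatives G x
  rw [← hG₀card]
  rcases (piecewiseClass F G).eq_empty_or_nonempty with hempty | ⟨-, g, hg, f, hf, -⟩
  · simp [hempty, covN_empty]
  by_cases htop : ∃ k, covN δ (F k) (empDist q x) = ⊤
  · obtain ⟨k, hk⟩ := htop
    obtain ⟨g₀, hg₀, -⟩ := hrep g hg
    have hprod : ∏ j, covN δ (F j) (empDist q x) = ⊤ :=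
      WithTop.prod_eq_top (Finset.mem_univ k) hk fun j _ => covN_ne_zero ⟨f j, hf j⟩
    rw [hprod, ENat.mul_top (by simpa using Finset.ne_empty_of_mem hg₀)]
    exact le_top
  push Not at htop
  choose H hH hHcard using fun k => exists_isProperNet_card_eq_covN (htop k)
  have hradius : (C : ℝ) ^ (1 / q) * δ ≤ ε := by
    rcases eq_or_ne ((C : ℝ) ^ (1 / q)) 0 with h0 | h0
    · rw [h0, zero_mul]
      exact hε.le
    · rw [mul_div_cancel₀ _ h0]
  calc covN ε (piecewiseClass F G) (empDist q x)
      ≤ covN ((C : ℝ) ^ (1 / q) * δ) (piecewiseClass F G) (empDist q x) := covN_anti hradius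
    _ ≤ G₀.card * ∏ k, ((H k).card : ℕ∞) := by
      simpa using covN_piecewiseClass_le hq0 (by positivity) x G₀ hG₀G hrep H hH
    _ = G₀.card * ∏ k, covN δ (F k) (empDist q x) := by simp_rw [hHcard]

theorem covN_pws_q {X : Type*} (C n : ℕ) (hC : 0 < C) (hn : 0 < n)
    (F : Fin C → Set (X → ℝ)) (G : Set (X → Fin C)) (x : Fin n → X)
    (q ε : ℝ) (hq : 1 ≤ q) (hε : 0 < ε) :
    covN ε
      {f : X → ℝ | ∃ g ∈ G, ∃ fk : Fin C → X → ℝ, (∀ k, fk k ∈ F k) ∧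
        f = fun w => fk (g w) w}
      (empDist q x)
      ≤ (Set.ncard {c : Fin n → Fin C | ∃ g ∈ G, c = fun i => g (x i)} : ℕ∞) *
          ∏ k : Fin C, covN (ε / (C : ℝ) ^ ((1 : ℝ) / q)) (F k) (empDist q x) :=
  covN_pws_q_general C n F G x q ε hq hε
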